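/- (Hyperbolic decomposition of the wave operator for the Klein–Gordon L^∞ estimate.) Let w be a C² function on K, and let 𝒟 denote the first-order operator 𝒟 := (s/t)∂_t + (x^a/s)∂̲_a (sum over a = 1,2), acting on functions of (t,x). Then for every (t,x) ∈ K: s^{−1}·𝒟(𝒟(s·w))(t,x) = □w(t,x) + S₁[w](t,x), where s·w denotes the function (t,x) ↦ √(t²−|x|²)·w(t,x), and S₁[w] := Σ_a ∂̲_a∂̲_a w + (x^a x^b/s²) ∂̲_a∂̲_b w + (2x^a/s²) ∂̲_a w. -/

import Mathlib

/-!
On `K` the hyperbolic derivative is `𝒟 = s⁻¹ S` with `S = t∂_t + x^a∂_a` the scaling field,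
`S u (p) = Du(p) p`. Since `s` is homogeneous of degree one, Euler's identity `S s = s` gives
`𝒟(s w) = w + S w`, hence `s⁻¹ 𝒟𝒟(s w) = s⁻² (S w + S² w) = s⁻² (2 Dw(p) p + D²w(p) p p)`.
Expanded in the Cartesian derivatives of `w` (whose Hessian is symmetric, `w` being `C²`), this
agrees with `□w + S₁[w]` once `s² = t² - |x|²` is substituted.
-/

noncomputable section

open Real MeasureTheory

abbrev Pt := ℝ × ℝ × ℝ

def tc (p : Pt) : ℝ := p.1

def rad (p : Pt) : ℝ := Real.sqrt (p.2.1 ^ 2 + p.2.2 ^ 2)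

def sv (p : Pt) : ℝ := Real.sqrt (tc p ^ 2 - rad p ^ 2)

def dir (α : Fin 3) : Pt := if α = 0 then (1, 0, 0) else if α = 1 then (0, 1, 0) else (0, 0, 1)

def xc (a : Fin 2) (p : Pt) : ℝ := if a = 0 then p.2.1 else p.2.2

def pd (α : Fin 3) (u : Pt → ℝ) : Pt → ℝ := fun p => fderiv ℝ u p (dir α)

def Lb (a : Fin 2) (u : Pt → ℝ) : Pt → ℝ := fun p => xc a p * pd 0 u p + tc p * pd a.succ u p

def pdu (a : Fin 2) (u : Pt → ℝ) : Pt → ℝ := fun p => (xc a p / tc p) * pd 0 u p + pd a.succ u p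

def Box (u : Pt → ℝ) : Pt → ℝ := fun p => pd 0 (pd 0 u) p - pd 1 (pd 1 u) p - pd 2 (pd 2 u) p

def Kset : Set Pt := {p | rad p + 1 < tc p}

def Kslab (s0 s1 : ℝ) : Set Pt :=
  {p | p ∈ Kset ∧ Real.sqrt (s0 ^ 2 + rad p ^ 2) ≤ tc p ∧ tc p ≤ Real.sqrt (s1 ^ 2 + rad p ^ 2)}

def Hyp (σ : ℝ) : Set Pt := {p | tc p = Real.sqrt (σ ^ 2 + rad p ^ 2)}

def L2H (σ : ℝ) (u : Pt → ℝ) : ℝ :=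
  Real.sqrt (∫ y : ℝ × ℝ, (u (Real.sqrt (σ ^ 2 + y.1 ^ 2 + y.2 ^ 2), y)) ^ 2)

def pdI : List (Fin 3) → (Pt → ℝ) → Pt → ℝ
  | [], u => u
  | α :: I, u => pd α (pdI I u)

def LbJ : List (Fin 2) → (Pt → ℝ) → Pt → ℝ
  | [], u => u
  | a :: J, u => Lb a (LbJ J u)

/-- The hyperbolic derivative operator `𝒟 := (s/t)∂_t + (x^a/s)∂̲_a`. -/
def calD (u : Pt → ℝ) : Pt → ℝ :=
  fun p => (sv p / tc p) * pd 0 u p + ∑ a : Fin 2, (xc a p / sv p) * pdu a u p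

/-- The operator `S₁[w] := Σ_a ∂̲_a∂̲_a w + (x^a x^b/s²)∂̲_a∂̲_b w + (2x^a/s²)∂̲_a w`. -/
def S1op (w : Pt → ℝ) : Pt → ℝ :=
  fun p => (∑ a : Fin 2, pdu a (pdu a w) p)
    + (∑ a : Fin 2, ∑ b : Fin 2, (xc a p * xc b p / sv p ^ 2) * pdu a (pdu b w) p)
    + (∑ a : Fin 2, (2 * xc a p / sv p ^ 2) * pdu a w p)

open Topology

def coords (p : Pt) : Fin 3 → ℝ := ![tc p, p.2.1, p.2.2]

lemma sum_coords_smul_dir (p : Pt) : ∑ μ, coords p μ • dir μ = p := by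
  obtain ⟨t, x, y⟩ := p
  simp [coords, dir, tc, Fin.sum_univ_three]

lemma ContinuousLinearMap.apply_eq_sum_coords {F : Type*} [NormedAddCommGroup F]
    [NormedSpace ℝ F] (L : Pt →L[ℝ] F) (v : Pt) : L v = ∑ μ, coords v μ • L (dir μ) := by
  conv_lhs => rw [← sum_coords_smul_dir v]
  simp only [map_sum, map_smul]

lemma ContDiffAt.differentiableAt_fderiv {E F : Type*} [NormedAddCommGroup E] [NormedSpace ℝ E]
    [NormedAddCommGroup F] [NormedSpace ℝ F] {f : E → F} {x : E} (hf : ContDiffAt ℝ 2 f x) :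
    DifferentiableAt ℝ (fderiv ℝ f) x :=
  (hf.fderiv_right (m := 1) (by norm_num)).differentiableAt one_ne_zero

section Calculus

variable {u v : Pt → ℝ} {p : Pt}

lemma fderiv_apply_eq_sum (v : Pt) : fderiv ℝ u p v = ∑ μ, coords v μ * pd μ u p :=
  (fderiv ℝ u p).apply_eq_sum_coords v

lemma pd_pd (hu : DifferentiableAt ℝ (fderiv ℝ u) p) (α β : Fin 3) :
    pd α (pd β u) p = fderiv ℝ (fderiv ℝ u) p (dir α) (dir β) := by
  rw [pd, show pd β u = fun q => fderiv ℝ u q (dir β) from rfl,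
    fderiv_clm_apply hu (differentiableAt_const _)]
  simp

lemma fderiv_fderiv_apply_eq_sum (hu : DifferentiableAt ℝ (fderiv ℝ u) p) (v : Pt) :
    fderiv ℝ (fderiv ℝ u) p v v = ∑ μ, ∑ ν, coords v μ * coords v ν * pd μ (pd ν u) p := by
  rw [(fderiv ℝ (fderiv ℝ u) p).apply_eq_sum_coords v, sum_apply]
  refine Finset.sum_congr rfl fun μ _ => ?_
  rw [smul_apply, (fderiv ℝ (fderiv ℝ u) p (dir μ)).apply_eq_sum_coords v, smul_eq_mul,
    Finset.mul_sum]
  refine Finset.sum_congr rfl fun ν _ => ?_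
  rw [pd_pd hu, smul_eq_mul]
  ring

lemma pd_comm (hu : ContDiffAt ℝ 2 u p) (α β : Fin 3) :
    pd α (pd β u) p = pd β (pd α u) p := by
  rw [pd_pd hu.differentiableAt_fderiv, pd_pd hu.differentiableAt_fderiv]
  exact hu.isSymmSndFDerivAt (by simp) _ _

lemma pd_add (hu : DifferentiableAt ℝ u p) (hv : DifferentiableAt ℝ v p) (α : Fin 3) :
    pd α (fun q => u q + v q) p = pd α u p + pd α v p := by
  simp [pd, fderiv_fun_add hu hv]

lemma pd_mul (hu : DifferentiableAt ℝ u p) (hv : DifferentiableAt ℝ v p) (α : Fin 3) :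
    pd α (fun q => u q * v q) p = pd α u p * v p + u p * pd α v p := by
  simp only [pd, fderiv_fun_mul hu hv, add_apply, smul_apply, smul_eq_mul]
  ring

lemma pd_div (hu : DifferentiableAt ℝ u p) (hv : DifferentiableAt ℝ v p) (hv0 : v p ≠ 0)
    (α : Fin 3) :
    pd α (fun q => u q / v q) p = (pd α u p * v p - u p * pd α v p) / v p ^ 2 := by
  have h : HasFDerivAt (fun q => u q * (v q)⁻¹) _ p :=
    hu.hasFDerivAt.fun_mul ((hasDerivAt_inv hv0).comp_hasFDerivAt p hv.hasFDerivAt)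
  simp only [div_eq_mul_inv, pd]
  rw [h.fderiv]
  simp only [neg_smul, smul_neg, add_apply, neg_apply, smul_apply, smul_eq_mul]
  field_simp
  ring

lemma pd_tc (α : Fin 3) : pd α tc p = tc (dir α) := by
  rw [pd, show fderiv ℝ tc p = ContinuousLinearMap.fst ℝ ℝ (ℝ × ℝ) from fderiv_fst]
  rfl

lemma differentiableAt_xc (a : Fin 2) : DifferentiableAt ℝ (xc a) p := by
  fin_cases a
  · exact (by fun_prop : DifferentiableAt ℝ (fun q : Pt => q.2.1) p)
  · exact (by fun_prop : DifferentiableAt ℝ (fun q : Pt => q.2.2) p)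

lemma pd_xc (a : Fin 2) (α : Fin 3) : pd α (xc a) p = xc a (dir α) := by
  fin_cases a
  · exact congrArg (· (dir α)) (hasFDerivAt_fst.comp p (hasFDerivAt_snd (𝕜 := ℝ) (p := p))).fderiv
  · exact congrArg (· (dir α)) (hasFDerivAt_snd.comp p (hasFDerivAt_snd (𝕜 := ℝ) (p := p))).fderiv

end Calculus

section LightCone

variable {p : Pt}

lemma isOpen_Kset : IsOpen Kset :=
  isOpen_lt ((Real.continuous_sqrt.comp (by fun_prop)).add continuous_const) continuous_fst

lemma sq_add_sq_lt_tc_sq (hp : p ∈ Kset) : p.2.1 ^ 2 + p.2.2 ^ 2 < tc p ^ 2 := by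
  have hr : rad p ^ 2 = p.2.1 ^ 2 + p.2.2 ^ 2 := Real.sq_sqrt (by positivity)
  have : rad p + 1 < tc p := hp
  nlinarith [show 0 ≤ rad p from Real.sqrt_nonneg _]

lemma tc_pos (hp : p ∈ Kset) : 0 < tc p := by
  have : rad p + 1 < tc p := hp
  linarith [show 0 ≤ rad p from Real.sqrt_nonneg _]

lemma sv_eq : sv = fun p : Pt => √(p.1 ^ 2 - (p.2.1 ^ 2 + p.2.2 ^ 2)) := by
  funext p
  rw [sv, rad, Real.sq_sqrt (by positivity), tc]

lemma sv_sq (hp : p ∈ Kset) : sv p ^ 2 = tc p ^ 2 - (p.2.1 ^ 2 + p.2.2 ^ 2) := by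
  rw [sv_eq]
  exact Real.sq_sqrt (sub_nonneg.2 (sq_add_sq_lt_tc_sq hp).le)

lemma sv_pos (hp : p ∈ Kset) : 0 < sv p := by
  rw [sv_eq]
  exact Real.sqrt_pos.2 (sub_pos.2 (sq_add_sq_lt_tc_sq hp))

lemma sv_smul {c : ℝ} (hc : 0 ≤ c) (p : Pt) : sv (c • p) = c * sv p := by
  simp only [sv_eq, Prod.smul_fst, Prod.smul_snd, smul_eq_mul]
  rw [show (c * p.1) ^ 2 - ((c * p.2.1) ^ 2 + (c * p.2.2) ^ 2)
      = c ^ 2 * (p.1 ^ 2 - (p.2.1 ^ 2 + p.2.2 ^ 2)) by ring,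
    Real.sqrt_mul (sq_nonneg c), Real.sqrt_sq hc]

lemma differentiableAt_sv (hp : p ∈ Kset) : DifferentiableAt ℝ sv p := by
  rw [sv_eq]
  exact (by fun_prop : DifferentiableAt ℝ (fun q : Pt => q.1 ^ 2 - (q.2.1 ^ 2 + q.2.2 ^ 2)) p).sqrt
    (sub_pos.2 (sq_add_sq_lt_tc_sq hp)).ne'

lemma fderiv_sv_apply_self (hp : p ∈ Kset) : fderiv ℝ sv p p = sv p := by
  have hray : HasDerivAt (fun c : ℝ => sv (c • p)) (fderiv ℝ sv p p) 1 := by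
    have h := (differentiableAt_sv hp).hasFDerivAt.comp_hasDerivAt_of_eq 1
      ((hasDerivAt_id (1 : ℝ)).smul_const p) (one_smul ℝ p).symm
    rwa [one_smul] at h
  have hhom : HasDerivAt (fun c : ℝ => sv (c • p)) (sv p) 1 := by
    refine (hasDerivAt_mul_const (sv p)).congr_of_eventuallyEq ?_
    filter_upwards [lt_mem_nhds one_pos] with c hc using sv_smul hc.le p
  exact hray.unique hhom

end LightCone

section HyperbolicDerivative

variable {u w : Pt → ℝ} {p : Pt}

lemma calD_eq_inv_sv_mul_fderiv (u : Pt → ℝ) (hp : p ∈ Kset) :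
    calD u p = (sv p)⁻¹ * fderiv ℝ u p p := by
  have ht := (tc_pos hp).ne'
  have hs := (sv_pos hp).ne'
  rw [fderiv_apply_eq_sum]
  simp only [calD, pdu, xc, coords, Fin.sum_univ_two, Fin.sum_univ_three, Fin.succ_zero_eq_one,
    Fin.succ_one_eq_two, Fin.isValue, one_ne_zero, ↓reduceIte, Matrix.cons_val_zero,
    Matrix.cons_val_one, Matrix.cons_val]
  field_simp
  linear_combination pd 0 u p * sv_sq hp

lemma calD_sv_mul (hp : p ∈ Kset) (hw : DifferentiableAt ℝ w p) :
    calD (fun q => sv q * w q) p = w p + fderiv ℝ w p p := by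
  have hs := (sv_pos hp).ne'
  rw [calD_eq_inv_sv_mul_fderiv _ hp, fderiv_fun_mul (differentiableAt_sv hp) hw]
  simp only [add_apply, smul_apply, smul_eq_mul, fderiv_sv_apply_self hp]
  field_simp
  ring

lemma fderiv_fderiv_apply_self (hu : DifferentiableAt ℝ (fderiv ℝ u) p) (v : Pt) :
    fderiv ℝ (fun q => fderiv ℝ u q q) p v = fderiv ℝ (fderiv ℝ u) p v p + fderiv ℝ u p v := by
  rw [fderiv_clm_apply hu differentiableAt_fun_id]
  simp [add_comm]

lemma inv_sv_mul_calD_calD_sv_mul (hw : ContDiffOn ℝ 2 w Kset) (hp : p ∈ Kset) :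
    (sv p)⁻¹ * calD (calD fun q => sv q * w q) p
      = (sv p ^ 2)⁻¹ * (2 * fderiv ℝ w p p + fderiv ℝ (fderiv ℝ w) p p p) := by
  have hw1 : ∀ q ∈ Kset, DifferentiableAt ℝ w q := fun q hq =>
    (hw.contDiffAt (isOpen_Kset.mem_nhds hq)).differentiableAt two_ne_zero
  have hD := (hw.contDiffAt (isOpen_Kset.mem_nhds hp)).differentiableAt_fderiv
  have hnear : calD (fun q => sv q * w q) =ᶠ[𝓝 p] fun q => w q + fderiv ℝ w q q := by
    filter_upwards [isOpen_Kset.mem_nhds hp] with q hq using calD_sv_mul hq (hw1 q hq)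
  rw [calD_eq_inv_sv_mul_fderiv _ hp, hnear.fderiv_eq,
    fderiv_fun_add (hw1 p hp) (hD.clm_apply differentiableAt_fun_id), add_apply,
    fderiv_fderiv_apply_self hD]
  ring

end HyperbolicDerivative

section SemiHyperboloidalFrame

variable {u : Pt → ℝ} {p : Pt}

lemma pdu_apply (a : Fin 2) (u : Pt → ℝ) (p : Pt) :
    pdu a u p = xc a p / tc p * pd 0 u p + pd a.succ u p := rfl

lemma pd_pdu (ht : tc p ≠ 0) (hu : ∀ β, DifferentiableAt ℝ (pd β u) p) (b : Fin 2) (α : Fin 3) :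
    pd α (pdu b u) p = (xc b (dir α) * tc p - xc b p * tc (dir α)) / tc p ^ 2 * pd 0 u p
      + xc b p / tc p * pd α (pd 0 u) p + pd α (pd b.succ u) p := by
  have htd : DifferentiableAt ℝ tc p := differentiableAt_fst
  have hxt : DifferentiableAt ℝ (fun q => xc b q / tc q) p := by
    simpa only [div_eq_mul_inv] using (differentiableAt_xc b).fun_mul (htd.fun_inv ht)
  rw [show pdu b u = fun q => xc b q / tc q * pd 0 u q + pd b.succ u q from rfl,
    pd_add (hxt.fun_mul (hu 0)) (hu _), pd_mul hxt (hu 0),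
    pd_div (differentiableAt_xc b) htd ht, pd_xc, pd_tc]

end SemiHyperboloidalFrame

/-- Hyperbolic decomposition of the wave operator for the Klein–Gordon
`L^∞` estimate: `s⁻¹ 𝒟(𝒟(s·w)) = □w + S₁[w]` on `K`. -/
theorem hyperbolic_decomposition (w : Pt → ℝ) (hw : ContDiffOn ℝ 2 w Kset)
    (p : Pt) (hp : p ∈ Kset) :
    (sv p)⁻¹ * calD (calD (fun q => sv q * w q)) p = Box w p + S1op w p := by
  have hwp : ContDiffAt ℝ 2 w p := hw.contDiffAt (isOpen_Kset.mem_nhds hp)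
  have hpd : ∀ β, DifferentiableAt ℝ (pd β w) p := fun β =>
    hwp.differentiableAt_fderiv.clm_apply (differentiableAt_const _)
  have ht := (tc_pos hp).ne'
  have hQ : tc p ^ 2 - (p.2.1 ^ 2 + p.2.2 ^ 2) ≠ 0 := sv_sq hp ▸ (pow_pos (sv_pos hp) 2).ne'
  rw [inv_sv_mul_calD_calD_sv_mul hw hp, fderiv_fderiv_apply_eq_sum hwp.differentiableAt_fderiv,
    fderiv_apply_eq_sum]
  simp only [Box, S1op, pdu_apply, pd_pdu ht hpd, sv_sq hp, coords, xc, tc, dir, Fin.sum_univ_two,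
    Fin.sum_univ_three, Fin.succ_zero_eq_one, Fin.succ_one_eq_two, Fin.isValue, Fin.succ_ne_zero,
    Fin.reduceEq, one_ne_zero, ↓reduceIte, Matrix.cons_val_zero, Matrix.cons_val_one,
    Matrix.cons_val] at ht hQ ⊢
  rw [pd_comm hwp 1 0, pd_comm hwp 2 0, pd_comm hwp 2 1]
  field_simp
  ring
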